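/- Let a, b ∈ [0,1] with a < b, let α ∈ (0,1), and let λ = α·δ_a + (1−α)·δ_b. If p > 1/2, then the iterates V^n λ converge in total variation to δ_a as n → ∞; if p < 1/2, then V^n λ converge in total variation to δ_b. -/

import Mathlib

open MeasureTheory Set Filter Topology ENNReal

/-- The unit interval `[0,1]` as a measurable space (with the Borel σ-algebra). -/
abbrev UnitInt : Type := ↥(Set.Icc (0:ℝ) 1)

/-- The family of measures `P(x,y,·)`: `p·δ_x + q·δ_y` if `x < y`, `δ_x` if `x = y`,
and `p·δ_y + q·δ_x` if `x > y`. -/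
noncomputable def Pker (p q : ℝ) (x y : UnitInt) : Measure UnitInt :=
  if x < y then ENNReal.ofReal p • Measure.dirac x + ENNReal.ofReal q • Measure.dirac y
  else if y < x then ENNReal.ofReal p • Measure.dirac y + ENNReal.ofReal q • Measure.dirac x
  else Measure.dirac x

/-- Total variation distance between two measures:
`sup { |μ A − ν A| : A measurable }` (computed in `ℝ≥0∞`). -/
noncomputable def tvDist {X : Type*} [MeasurableSpace X] (μ ν : Measure X) : ℝ≥0∞ :=
  ⨆ (A : Set X) (_ : MeasurableSet A), (μ A - ν A) ⊔ (ν A - μ A)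

/-!
For `a < b`, `V` maps the two-point measure `t δ_a + (1 - t) δ_b` to another such measure: it acts
on the weight `t` of the smaller point by `t ↦ t + (2p - 1) t (1 - t)`. For `p > 1/2` this weight
increases, and `1 - t` then shrinks at least by the factor `1 - (2p - 1) t₀` at every step, so the
iterates converge geometrically to `δ_a`. The map `t ↦ 1 - t` conjugates the weight dynamics for
`p` to those for `1 - p`, which gives the case `p < 1/2` with the roles of `a` and `b` exchanged.
-/

noncomputable def twoPoint {X : Type*} [MeasurableSpace X] (a b : X) (t : ℝ) : Measure X :=
  ENNReal.ofReal t • Measure.dirac a + ENNReal.ofReal (1 - t) • Measure.dirac b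

def weightStep (r t : ℝ) : ℝ := t + r * (t * (1 - t))

section weightStep

variable {r t : ℝ}

lemma one_sub_weightStep (r t : ℝ) : 1 - weightStep r t = (1 - t) * (1 - r * t) := by
  unfold weightStep; ring

lemma iterate_weightStep_neg (r t : ℝ) (n : ℕ) :
    (weightStep (-r))^[n] t = 1 - (weightStep r)^[n] (1 - t) := by
  have h : Function.Semiconj (fun s => 1 - s) (weightStep r) (weightStep (-r)) := fun s => by
    unfold weightStep; ring
  simpa using (h.iterate_right n (1 - t)).symm

lemma mapsTo_weightStep (hr : r ∈ Icc (-1) 1) : MapsTo (weightStep r) (Icc 0 1) (Icc 0 1) := by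
  rintro t ⟨ht0, ht1⟩
  obtain ⟨hr0, hr1⟩ := hr
  have h : 0 ≤ 1 - weightStep r t := by
    rw [one_sub_weightStep]
    exact mul_nonneg (by linarith) (by nlinarith)
  refine ⟨?_, by linarith⟩
  unfold weightStep
  nlinarith [mul_nonneg ht0 (sub_nonneg.2 ht1)]

lemma iterate_weightStep_mem_Icc (hr : r ∈ Icc (-1) 1) (ht : t ∈ Icc 0 1) (n : ℕ) :
    (weightStep r)^[n] t ∈ Icc 0 1 :=
  (mapsTo_weightStep hr).iterate n ht

lemma le_weightStep (hr : 0 ≤ r) (ht : t ∈ Icc 0 1) : t ≤ weightStep r t :=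
  le_add_of_nonneg_right (mul_nonneg hr (mul_nonneg ht.1 (sub_nonneg.2 ht.2)))

lemma le_iterate_weightStep (hr : r ∈ Icc 0 1) (ht : t ∈ Icc 0 1) (n : ℕ) :
    t ≤ (weightStep r)^[n] t := by
  induction n with
  | zero => rfl
  | succ n ih =>
    rw [Function.iterate_succ_apply']
    exact ih.trans (le_weightStep hr.1
      (iterate_weightStep_mem_Icc (Icc_subset_Icc_left (by norm_num) hr) ht n))

lemma one_sub_iterate_weightStep_le (hr : r ∈ Icc 0 1) (ht : t ∈ Icc 0 1) (n : ℕ) :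
    1 - (weightStep r)^[n] t ≤ (1 - t) * (1 - r * t) ^ n := by
  induction n with
  | zero => simp
  | succ n ih =>
    have hw := iterate_weightStep_mem_Icc (Icc_subset_Icc_left (by norm_num) hr) ht n
    have htw := le_iterate_weightStep hr ht n
    rw [Function.iterate_succ_apply', one_sub_weightStep, pow_succ, ← mul_assoc]
    exact mul_le_mul ih (sub_le_sub_left (mul_le_mul_of_nonneg_left htw hr.1) 1)
      (sub_nonneg.2 (mul_le_one₀ hr.2 hw.1 hw.2))
      (mul_nonneg (sub_nonneg.2 ht.2) (pow_nonneg (sub_nonneg.2 (mul_le_one₀ hr.2 ht.1 ht.2)) n))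

theorem tendsto_iterate_weightStep (hr : r ∈ Ioc 0 1) (ht : t ∈ Ioc 0 1) :
    Tendsto (fun n => (weightStep r)^[n] t) atTop (𝓝 1) := by
  have hr' : r ∈ Icc 0 1 := Ioc_subset_Icc_self hr
  have ht' : t ∈ Icc 0 1 := Ioc_subset_Icc_self ht
  have hc : 1 - r * t ∈ Ico 0 1 :=
    ⟨sub_nonneg.2 (mul_le_one₀ hr.2 ht'.1 ht.2), by nlinarith [mul_pos hr.1 ht.1]⟩
  have hgeom : Tendsto (fun n : ℕ => 1 - (1 - t) * (1 - r * t) ^ n) atTop (𝓝 1) := by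
    simpa using ((_root_.tendsto_pow_atTop_nhds_zero_of_lt_one hc.1 hc.2).const_mul
      (1 - t)).const_sub 1
  refine tendsto_of_tendsto_of_tendsto_of_le_of_le hgeom tendsto_const_nhds (fun n => ?_)
    (fun n => (iterate_weightStep_mem_Icc (Icc_subset_Icc_left (by norm_num) hr') ht' n).2)
  linarith [one_sub_iterate_weightStep_le hr' ht' n]

end weightStep

section twoPoint

variable {X : Type*} [MeasurableSpace X]

lemma twoPoint_apply (a b : X) (t : ℝ) (A : Set X) :
    twoPoint a b t A = ENNReal.ofReal t * Measure.dirac a A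
      + ENNReal.ofReal (1 - t) * Measure.dirac b A := by
  simp [twoPoint]

lemma lintegral_twoPoint [MeasurableSingletonClass X] (a b : X) (t : ℝ) (g : X → ℝ≥0∞) :
    ∫⁻ x, g x ∂(twoPoint a b t) = ENNReal.ofReal t * g a + ENNReal.ofReal (1 - t) * g b := by
  simp [twoPoint, lintegral_add_measure, lintegral_smul_measure, lintegral_dirac]

lemma twoPoint_one_sub (a b : X) (t : ℝ) : twoPoint a b (1 - t) = twoPoint b a t := by
  simp [twoPoint, add_comm]

lemma tvDist_twoPoint_dirac_le (a b : X) {t : ℝ} (ht : t ∈ Icc 0 1) :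
    tvDist (twoPoint a b t) (Measure.dirac a) ≤ ENNReal.ofReal (1 - t) := by
  have hsum : ENNReal.ofReal t + ENNReal.ofReal (1 - t) = 1 := by
    rw [← ENNReal.ofReal_add ht.1 (by linarith [ht.2]), add_sub_cancel, ENNReal.ofReal_one]
  have hle : ENNReal.ofReal t ≤ 1 := hsum ▸ le_self_add
  refine iSup₂_le fun A hA => ?_
  rw [twoPoint_apply, Measure.dirac_apply' a hA, Measure.dirac_apply' b hA]
  by_cases ha : a ∈ A <;> by_cases hb : b ∈ A <;> simp [ha, hb, hsum]
  exact ⟨hle.trans le_add_self, by rw [add_comm, hsum]⟩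

theorem tendsto_tvDist_twoPoint_iterate_weightStep (a b : X) {r t : ℝ} (hr : r ∈ Ioc 0 1)
    (ht : t ∈ Ioc 0 1) :
    Tendsto (fun n => tvDist (twoPoint a b ((weightStep r)^[n] t)) (Measure.dirac a)) atTop
      (𝓝 0) := by
  have hlim : Tendsto (fun n => ENNReal.ofReal (1 - (weightStep r)^[n] t)) atTop (𝓝 0) := by
    simpa using ENNReal.tendsto_ofReal ((tendsto_iterate_weightStep hr ht).const_sub 1)
  refine tendsto_of_tendsto_of_tendsto_of_le_of_le tendsto_const_nhds hlim (fun n => zero_le)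
    (fun n => tvDist_twoPoint_dirac_le a b (iterate_weightStep_mem_Icc
      ⟨by linarith [hr.1], hr.2⟩ (Ioc_subset_Icc_self ht) n))

end twoPoint

def IsLebesgueQuadraticOperator (p q : ℝ) (V : Measure UnitInt → Measure UnitInt) : Prop :=
  ∀ (μ : Measure UnitInt) (A : Set UnitInt), MeasurableSet A →
    V μ A = ∫⁻ x, ∫⁻ y, Pker p q x y A ∂μ ∂μ

section Pker

variable (p q : ℝ)

lemma Pker_self (x : UnitInt) : Pker p q x x = Measure.dirac x := by
  simp [Pker]

lemma Pker_of_lt {x y : UnitInt} (hxy : x < y) :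
    Pker p q x y = ENNReal.ofReal p • Measure.dirac x + ENNReal.ofReal q • Measure.dirac y := by
  simp [Pker, hxy]

lemma Pker_of_gt {x y : UnitInt} (hxy : x < y) :
    Pker p q y x = ENNReal.ofReal p • Measure.dirac x + ENNReal.ofReal q • Measure.dirac y := by
  simp [Pker, hxy, hxy.not_gt]

end Pker

lemma ofReal_mul_self_add_two_mul_mul {s u c : ℝ} (hs : 0 ≤ s) (hu : 0 ≤ u) (hc : 0 ≤ c) :
    ENNReal.ofReal (s * s + 2 * (s * u * c)) = ENNReal.ofReal s * ENNReal.ofReal s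
      + 2 * (ENNReal.ofReal s * ENNReal.ofReal u * ENNReal.ofReal c) := by
  rw [ENNReal.ofReal_add (by positivity) (by positivity), ENNReal.ofReal_mul hs,
    ENNReal.ofReal_mul zero_le_two, ENNReal.ofReal_mul (by positivity), ENNReal.ofReal_mul hs,
    ENNReal.ofReal_ofNat]

namespace IsLebesgueQuadraticOperator

variable {p q : ℝ} {V : Measure UnitInt → Measure UnitInt}

lemma apply_twoPoint (hV : IsLebesgueQuadraticOperator p q V) (hp : 0 ≤ p) (hq : 0 ≤ q)
    (hpq : p + q = 1) {a b : UnitInt} (hab : a < b) {t : ℝ} (ht : t ∈ Icc 0 1) :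
    V (twoPoint a b t) = twoPoint a b (weightStep (2 * p - 1) t) := by
  obtain ⟨ht0, ht1⟩ := ht
  have ht1' : 0 ≤ 1 - t := sub_nonneg.2 ht1
  have hwa : ENNReal.ofReal (weightStep (2 * p - 1) t) = ENNReal.ofReal t * ENNReal.ofReal t
      + 2 * (ENNReal.ofReal t * ENNReal.ofReal (1 - t) * ENNReal.ofReal p) := by
    rw [← ofReal_mul_self_add_two_mul_mul ht0 ht1' hp]
    congr 1; unfold weightStep; ring
  have hwb : ENNReal.ofReal (1 - weightStep (2 * p - 1) t)
      = ENNReal.ofReal (1 - t) * ENNReal.ofReal (1 - t)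
        + 2 * (ENNReal.ofReal (1 - t) * ENNReal.ofReal t * ENNReal.ofReal q) := by
    rw [← ofReal_mul_self_add_two_mul_mul ht1' ht0 hq, show q = 1 - p by linarith]
    congr 1; unfold weightStep; ring
  ext A hA
  simp only [hV _ A hA, lintegral_twoPoint, Pker_self, Pker_of_lt p q hab, Pker_of_gt p q hab,
    twoPoint_apply, Measure.add_apply, Measure.smul_apply, smul_eq_mul, hwa, hwb]
  ring

lemma iterate_twoPoint (hV : IsLebesgueQuadraticOperator p q V) (hp : 0 ≤ p) (hq : 0 ≤ q)
    (hpq : p + q = 1) {a b : UnitInt} (hab : a < b) {t : ℝ} (ht : t ∈ Icc 0 1) (n : ℕ) :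
    V^[n] (twoPoint a b t) = twoPoint a b ((weightStep (2 * p - 1))^[n] t) := by
  have hr : 2 * p - 1 ∈ Icc (-1) 1 := ⟨by linarith, by linarith⟩
  induction n with
  | zero => rfl
  | succ n ih =>
    rw [Function.iterate_succ_apply', ih, Function.iterate_succ_apply',
      hV.apply_twoPoint hp hq hpq hab (iterate_weightStep_mem_Icc hr ht n)]

end IsLebesgueQuadraticOperator

theorem iterates_two_point_tv_limit (p q : ℝ) (hp : 0 ≤ p) (hq : 0 ≤ q) (hpq : p + q = 1)
    (V : Measure UnitInt → Measure UnitInt)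
    (hV : ∀ (μ : Measure UnitInt) (A : Set UnitInt), MeasurableSet A →
      V μ A = ∫⁻ x, ∫⁻ y, Pker p q x y A ∂μ ∂μ)
    (a b : UnitInt) (hab : a < b) (α : ℝ) (hα : α ∈ Set.Ioo (0:ℝ) 1)
    (lam : Measure UnitInt)
    (hlam : lam = ENNReal.ofReal α • Measure.dirac a + ENNReal.ofReal (1 - α) • Measure.dirac b) :
    (p > 1/2 → Tendsto (fun n => tvDist (V^[n] lam) (Measure.dirac a)) atTop (𝓝 0)) ∧
    (p < 1/2 → Tendsto (fun n => tvDist (V^[n] lam) (Measure.dirac b)) atTop (𝓝 0)) := by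
  obtain rfl : lam = twoPoint a b α := hlam
  have hiter := IsLebesgueQuadraticOperator.iterate_twoPoint hV hp hq hpq hab
    (Ioo_subset_Icc_self hα)
  refine ⟨fun hp_gt => ?_, fun hp_lt => ?_⟩
  · simp only [hiter]
    exact tendsto_tvDist_twoPoint_iterate_weightStep a b ⟨by linarith, by linarith⟩
      (Ioo_subset_Ioc_self hα)
  · have hswap (n : ℕ) : twoPoint a b ((weightStep (2 * p - 1))^[n] α)
        = twoPoint b a ((weightStep (1 - 2 * p))^[n] (1 - α)) := by
      rw [show 2 * p - 1 = -(1 - 2 * p) by ring, iterate_weightStep_neg, twoPoint_one_sub]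
    simp only [hiter, hswap]
    exact tendsto_tvDist_twoPoint_iterate_weightStep b a ⟨by linarith, by linarith⟩
      ⟨by linarith [hα.2], by linarith [hα.1]⟩
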